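/- arXiv:1804.09354 — 4 statements merged into one kernel-verified Lean document; each statement's English description precedes it below -/
import Mathlib

section
/- Let DMU_o = (x_o,y_o), o ∈ J, be FDH_V-efficient. Then Left-CRS prevails at DMU_o if and only if σ_o^- = 1. -/
open Set

noncomputable section

/-- The FDH variable-returns-to-scale technology:
`T = {(x,y) : y ≥ 0 and ∃ j, x_j ≤ x and y ≤ y_j}`. -/
def FDH {n m s : ℕ} (x : Fin n → Fin m → ℝ) (y : Fin n → Fin s → ℝ) :
    Set ((Fin m → ℝ) × (Fin s → ℝ)) :=
  {p | (∀ r, 0 ≤ p.2 r) ∧ ∃ j : Fin n, (∀ i, x j i ≤ p.1 i) ∧ (∀ r, p.2 r ≤ y j r)}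

/-- DMU_o is FDH_V-efficient: no (x,y) ∈ T with x ≤ x_o, y ≥ y_o, (x,y) ≠ (x_o,y_o). -/
def FDHEfficient {n m s : ℕ} (x : Fin n → Fin m → ℝ) (y : Fin n → Fin s → ℝ)
    (o : Fin n) : Prop :=
  ¬ ∃ p ∈ FDH x y, (∀ i, p.1 i ≤ x o i) ∧ (∀ r, y o r ≤ p.2 r) ∧ p ≠ (x o, y o)

/-- `α_{jo} = max_i x_{ij} / x_{io}`. -/
def alphaRatio {n m s : ℕ} (x : Fin n → Fin m → ℝ) (_y : Fin n → Fin s → ℝ)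
    (o j : Fin n) : ℝ :=
  ⨆ i : Fin m, x j i / x o i

/-- `β_{jo} = min_r y_{rj} / y_{ro}`. -/
def betaRatio {n m s : ℕ} (_x : Fin n → Fin m → ℝ) (y : Fin n → Fin s → ℝ)
    (o j : Fin n) : ℝ :=
  ⨅ r : Fin s, y j r / y o r

/-- `θ_o(D) = inf {θ : ∃ j ∈ J, δ ∈ D, δ x_j ≤ θ x_o, δ y_j ≥ y_o}`. -/
def thetaEff {n m s : ℕ} (x : Fin n → Fin m → ℝ) (y : Fin n → Fin s → ℝ)
    (o : Fin n) (D : Set ℝ) : ℝ :=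
  sInf {θ : ℝ | ∃ j : Fin n, ∃ δ ∈ D,
    (∀ i, δ * x j i ≤ θ * x o i) ∧ (∀ r, y o r ≤ δ * y j r)}

/-- G-IRS prevails at DMU_o iff `θ_o^{ND} > θ_o^{C} = θ_o^{NI}`. -/
def GIRS {n m s : ℕ} (x : Fin n → Fin m → ℝ) (y : Fin n → Fin s → ℝ)
    (o : Fin n) : Prop :=
  thetaEff x y o (Ici 1) > thetaEff x y o (Ici 0) ∧
    thetaEff x y o (Ici 0) = thetaEff x y o (Icc 0 1)

/-- G-DRS prevails at DMU_o iff `θ_o^{NI} > θ_o^{C} = θ_o^{ND}`. -/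
def GDRS {n m s : ℕ} (x : Fin n → Fin m → ℝ) (y : Fin n → Fin s → ℝ)
    (o : Fin n) : Prop :=
  thetaEff x y o (Icc 0 1) > thetaEff x y o (Ici 0) ∧
    thetaEff x y o (Ici 0) = thetaEff x y o (Ici 1)

/-- G-CRS prevails at DMU_o iff `θ_o^{C} = θ_o^{NI} = θ_o^{ND} = 1`. -/
def GCRS {n m s : ℕ} (x : Fin n → Fin m → ℝ) (y : Fin n → Fin s → ℝ)
    (o : Fin n) : Prop :=
  thetaEff x y o (Ici 0) = 1 ∧ thetaEff x y o (Icc 0 1) = 1 ∧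
    thetaEff x y o (Ici 1) = 1

/-- G-SCRS prevails at DMU_o iff `θ_o^{C} = θ_o^{NI} = θ_o^{ND} < 1`. -/
def GSCRS {n m s : ℕ} (x : Fin n → Fin m → ℝ) (y : Fin n → Fin s → ℝ)
    (o : Fin n) : Prop :=
  thetaEff x y o (Ici 0) = thetaEff x y o (Icc 0 1) ∧
    thetaEff x y o (Icc 0 1) = thetaEff x y o (Ici 1) ∧
    thetaEff x y o (Ici 1) < 1

/-- Response function `β_o(α) = sup {β : (α x_o, β y_o) ∈ T}`. -/
def respFun {n m s : ℕ} (x : Fin n → Fin m → ℝ) (y : Fin n → Fin s → ℝ)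
    (o : Fin n) (α : ℝ) : ℝ :=
  sSup {β : ℝ | ((fun i => α * x o i), (fun r => β * y o r)) ∈ FDH x y}

/-- Maximum incremental ratio `σ_o^+ = sup_{α > 1} (β_o(α) - 1)/(α - 1)`. -/
def sigmaPlus {n m s : ℕ} (x : Fin n → Fin m → ℝ) (y : Fin n → Fin s → ℝ)
    (o : Fin n) : ℝ :=
  sSup {ρ : ℝ | ∃ α : ℝ, 1 < α ∧ ρ = (respFun x y o α - 1) / (α - 1)}

/-- Minimum decremental ratio `σ_o^- = inf {(β_o(α)-1)/(α-1) : α < 1 feasible}`,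
taken in the extended reals (so it is `+∞` when no `α < 1` is feasible). -/
def sigmaMinus {n m s : ℕ} (x : Fin n → Fin m → ℝ) (y : Fin n → Fin s → ℝ)
    (o : Fin n) : EReal :=
  sInf {ρ : EReal | ∃ α : ℝ, α < 1 ∧
    (∃ β : ℝ, ((fun i => α * x o i), (fun r => β * y o r)) ∈ FDH x y) ∧
    ρ = (((respFun x y o α - 1) / (α - 1) : ℝ) : EReal)}

/-- Right-IRS: `(δ x_o, δ y_o) ∈ int T` for some `δ > 1`. -/
def RightIRS {n m s : ℕ} (x : Fin n → Fin m → ℝ) (y : Fin n → Fin s → ℝ)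
    (o : Fin n) : Prop :=
  ∃ δ : ℝ, 1 < δ ∧
    ((fun i => δ * x o i), (fun r => δ * y o r)) ∈ interior (FDH x y)

/-- Right-DRS: `(δ x_o, δ y_o) ∉ T` for every `δ > 1`. -/
def RightDRS {n m s : ℕ} (x : Fin n → Fin m → ℝ) (y : Fin n → Fin s → ℝ)
    (o : Fin n) : Prop :=
  ∀ δ : ℝ, 1 < δ →
    ((fun i => δ * x o i), (fun r => δ * y o r)) ∉ FDH x y

/-- Right-CRS: neither Right-IRS nor Right-DRS. -/
def RightCRS {n m s : ℕ} (x : Fin n → Fin m → ℝ) (y : Fin n → Fin s → ℝ)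
    (o : Fin n) : Prop :=
  ¬ RightIRS x y o ∧ ¬ RightDRS x y o

/-- Left-IRS: `(δ x_o, δ y_o) ∉ T` for every `δ ∈ (0,1)`. -/
def LeftIRS {n m s : ℕ} (x : Fin n → Fin m → ℝ) (y : Fin n → Fin s → ℝ)
    (o : Fin n) : Prop :=
  ∀ δ : ℝ, 0 < δ → δ < 1 →
    ((fun i => δ * x o i), (fun r => δ * y o r)) ∉ FDH x y

/-- Left-DRS: `(δ x_o, δ y_o) ∈ int T` for some `δ ∈ (0,1)`. -/
def LeftDRS {n m s : ℕ} (x : Fin n → Fin m → ℝ) (y : Fin n → Fin s → ℝ)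
    (o : Fin n) : Prop :=
  ∃ δ : ℝ, 0 < δ ∧ δ < 1 ∧
    ((fun i => δ * x o i), (fun r => δ * y o r)) ∈ interior (FDH x y)

/-- Left-CRS: neither Left-IRS nor Left-DRS. -/
def LeftCRS {n m s : ℕ} (x : Fin n → Fin m → ℝ) (y : Fin n → Fin s → ℝ)
    (o : Fin n) : Prop :=
  ¬ LeftIRS x y o ∧ ¬ LeftDRS x y o

/-! Write `a_j = alphaRatio x y o j` and `b_j = betaRatio x y o j`. On the ray through DMU_o,
`(α x_o, β y_o) ∈ T` iff `0 ≤ β ≤ b_j` for some `j` with `a_j ≤ α`, so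
`β_o(α) = max {b_j : a_j ≤ α}`. Hence Left-IRS fails iff `a_j ≤ b_j` for some `j` with `a_j < 1`,
and Left-DRS holds iff `a_j < b_j` for some such `j`. For `α < 1` the ratio
`(β_o(α) - 1) / (α - 1)` is at least `1` iff `β_o(α) ≤ α`. So without Left-DRS every ratio is at
least `1`, and a unit with `a_j = b_j < 1` attains `1`; conversely a unit with `a_j < 1`,
`a_j < b_j` gives a ratio below `1` at `α = a_j`, while under Left-IRS every ratio is at least
the finite minimum of `(1 - b_k) / (1 - a_k) > 1` over `a_k < 1`. -/

open Filter Topology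

section

variable {n m s : ℕ} {x : Fin n → Fin m → ℝ} {y : Fin n → Fin s → ℝ} {o : Fin n}

theorem alphaRatio_le_iff (hm : 0 < m) (hx : ∀ j i, 0 < x j i) {j : Fin n} {α : ℝ} :
    alphaRatio x y o j ≤ α ↔ ∀ i, x j i ≤ α * x o i := by
  have : Nonempty (Fin m) := ⟨⟨0, hm⟩⟩
  simp only [alphaRatio, ciSup_le_iff (finite_range _).bddAbove, div_le_iff₀ (hx o _)]

theorem le_betaRatio_iff (hs : 0 < s) (hy : ∀ j r, 0 < y j r) {j : Fin n} {β : ℝ} :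
    β ≤ betaRatio x y o j ↔ ∀ r, β * y o r ≤ y j r := by
  have : Nonempty (Fin s) := ⟨⟨0, hs⟩⟩
  simp only [betaRatio, le_ciInf_iff (finite_range _).bddBelow, le_div_iff₀ (hy o _)]

theorem alphaRatio_pos (hm : 0 < m) (hx : ∀ j i, 0 < x j i) (j : Fin n) :
    0 < alphaRatio x y o j :=
  (div_pos (hx j ⟨0, hm⟩) (hx o ⟨0, hm⟩)).trans_le
    (le_ciSup (f := fun i => x j i / x o i) (finite_range _).bddAbove ⟨0, hm⟩)

theorem betaRatio_pos (hs : 0 < s) (hy : ∀ j r, 0 < y j r) (j : Fin n) :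
    0 < betaRatio x y o j := by
  have : Nonempty (Fin s) := ⟨⟨0, hs⟩⟩
  obtain ⟨r, hr⟩ := exists_eq_ciInf_of_finite (f := fun r => y j r / y o r)
  rw [betaRatio, ← hr]
  exact div_pos (hy j r) (hy o r)

theorem mem_FDH_scaled_iff (hm : 0 < m) (hs : 0 < s) (hx : ∀ j i, 0 < x j i)
    (hy : ∀ j r, 0 < y j r) {α β : ℝ} :
    ((fun i => α * x o i), (fun r => β * y o r)) ∈ FDH x y ↔
      0 ≤ β ∧ ∃ j, alphaRatio x y o j ≤ α ∧ β ≤ betaRatio x y o j := by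
  simp only [FDH, mem_ofPred_eq, alphaRatio_le_iff hm hx, le_betaRatio_iff hs hy]
  refine and_congr_left' ⟨fun h => ?_, fun h r => mul_nonneg h (hy o r).le⟩
  exact nonneg_of_mul_nonneg_left (h ⟨0, hs⟩) (hy o ⟨0, hs⟩)

theorem mem_interior_FDH {p : (Fin m → ℝ) × (Fin s → ℝ)} (j : Fin n)
    (h₁ : ∀ i, x j i < p.1 i) (h₂ : ∀ r, 0 < p.2 r ∧ p.2 r < y j r) :
    p ∈ interior (FDH x y) := by
  refine interior_maximal
    (t := (univ.pi fun i => Ioi (x j i)) ×ˢ univ.pi fun r => Ioo 0 (y j r)) ?_ ?_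
    ⟨fun i _ => h₁ i, fun r _ => h₂ r⟩
  · rintro q ⟨hq₁, hq₂⟩
    exact ⟨fun r => (hq₂ r trivial).1.le, j, fun i => (hq₁ i trivial).le,
      fun r => (hq₂ r trivial).2.le⟩
  · exact (isOpen_set_pi finite_univ fun i _ => isOpen_Ioi).prod
      (isOpen_set_pi finite_univ fun r _ => isOpen_Ioo)

theorem respFun_eq_sup' (hm : 0 < m) (hs : 0 < s) (hx : ∀ j i, 0 < x j i)
    (hy : ∀ j r, 0 < y j r) {α : ℝ}
    (hS : (Finset.univ.filter fun j => alphaRatio x y o j ≤ α).Nonempty) :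
    respFun x y o α = (Finset.univ.filter fun j => alphaRatio x y o j ≤ α).sup' hS
      (betaRatio x y o) := by
  refine IsGreatest.csSup_eq ⟨?_, fun β hβ => ?_⟩
  · obtain ⟨k, hk, hkeq⟩ := Finset.exists_mem_eq_sup' hS (betaRatio x y o)
    rw [mem_ofPred_eq, mem_FDH_scaled_iff hm hs hx hy, hkeq]
    exact ⟨(betaRatio_pos hs hy k).le, k, (Finset.mem_filter.mp hk).2, le_rfl⟩
  · obtain ⟨-, j, hj, hβj⟩ := (mem_FDH_scaled_iff hm hs hx hy).mp hβ
    exact hβj.trans (Finset.le_sup' _ (Finset.mem_filter.mpr ⟨Finset.mem_univ j, hj⟩))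

theorem betaRatio_le_respFun (hm : 0 < m) (hs : 0 < s) (hx : ∀ j i, 0 < x j i)
    (hy : ∀ j r, 0 < y j r) {j : Fin n} {α : ℝ} (hj : alphaRatio x y o j ≤ α) :
    betaRatio x y o j ≤ respFun x y o α := by
  have hjS : j ∈ Finset.univ.filter fun j => alphaRatio x y o j ≤ α := by simpa using hj
  rw [respFun_eq_sup' hm hs hx hy ⟨j, hjS⟩]
  exact Finset.le_sup' _ hjS

theorem exists_respFun_eq_betaRatio (hm : 0 < m) (hs : 0 < s) (hx : ∀ j i, 0 < x j i)
    (hy : ∀ j r, 0 < y j r) {α : ℝ} (hα : ∃ j, alphaRatio x y o j ≤ α) :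
    ∃ k, alphaRatio x y o k ≤ α ∧ respFun x y o α = betaRatio x y o k := by
  obtain ⟨j, hj⟩ := hα
  have hS : (Finset.univ.filter fun j => alphaRatio x y o j ≤ α).Nonempty :=
    ⟨j, by simpa using hj⟩
  obtain ⟨k, hk, hkeq⟩ := Finset.exists_mem_eq_sup' hS (betaRatio x y o)
  exact ⟨k, by simpa using hk, by rw [respFun_eq_sup' hm hs hx hy hS, hkeq]⟩

theorem sigmaMinus_le (hm : 0 < m) (hs : 0 < s) (hx : ∀ j i, 0 < x j i)
    (hy : ∀ j r, 0 < y j r) {α : ℝ} (hα : α < 1) {j : Fin n}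
    (hj : alphaRatio x y o j ≤ α) :
    sigmaMinus x y o ≤ (((respFun x y o α - 1) / (α - 1) : ℝ) : EReal) :=
  sInf_le ⟨α, hα, ⟨betaRatio x y o j, (mem_FDH_scaled_iff hm hs hx hy).mpr
    ⟨(betaRatio_pos hs hy j).le, j, hj, le_rfl⟩⟩, rfl⟩

theorem le_sigmaMinus (hm : 0 < m) (hs : 0 < s) (hx : ∀ j i, 0 < x j i)
    (hy : ∀ j r, 0 < y j r) {c : EReal}
    (h : ∀ α < 1, ∀ j, alphaRatio x y o j ≤ α →
      c ≤ (((respFun x y o α - 1) / (α - 1) : ℝ) : EReal)) :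
    c ≤ sigmaMinus x y o := by
  refine le_sInf ?_
  rintro _ ⟨α, hα, ⟨β, hβ⟩, rfl⟩
  obtain ⟨-, j, hj, -⟩ := (mem_FDH_scaled_iff hm hs hx hy).mp hβ
  exact h α hα j hj

theorem not_leftIRS_iff (hm : 0 < m) (hs : 0 < s) (hx : ∀ j i, 0 < x j i)
    (hy : ∀ j r, 0 < y j r) :
    ¬ LeftIRS x y o ↔
      ∃ j, alphaRatio x y o j < 1 ∧ alphaRatio x y o j ≤ betaRatio x y o j := by
  simp only [LeftIRS, not_forall, not_not, mem_FDH_scaled_iff hm hs hx hy, exists_prop]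
  constructor
  · rintro ⟨δ, -, hδ, -, j, hjδ, hδj⟩
    exact ⟨j, hjδ.trans_lt hδ, hjδ.trans hδj⟩
  · rintro ⟨j, hj, hjj⟩
    have hpos := alphaRatio_pos (y := y) (o := o) hm hx j
    exact ⟨_, hpos, hj, hpos.le, j, le_rfl, hjj⟩

theorem leftDRS_iff (hm : 0 < m) (hs : 0 < s) (hx : ∀ j i, 0 < x j i)
    (hy : ∀ j r, 0 < y j r) :
    LeftDRS x y o ↔
      ∃ j, alphaRatio x y o j < 1 ∧ alphaRatio x y o j < betaRatio x y o j := by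
  constructor
  · rintro ⟨δ, -, hδ, hint⟩
    let f : ℝ → (Fin m → ℝ) × (Fin s → ℝ) := fun t =>
      ((fun i => (δ - t) * x o i), (fun r => (δ + t) * y o r))
    have hf : Tendsto f (𝓝[>] 0) (𝓝 (f 0)) :=
      (Continuous.tendsto (by fun_prop) 0).mono_left nhdsWithin_le_nhds
    have hf0 : f 0 = ((fun i => δ * x o i), (fun r => δ * y o r)) := by simp [f]
    rw [← hf0, mem_interior_iff_mem_nhds] at hint
    obtain ⟨t, ht, ht0⟩ := ((hf.eventually hint).and self_mem_nhdsWithin).exists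
    obtain ⟨-, j, hjt, htj⟩ := (mem_FDH_scaled_iff hm hs hx hy).mp ht
    exact ⟨j, by linarith, by linarith⟩
  · rintro ⟨j, hj, hjj⟩
    obtain ⟨δ, hjδ, hδ⟩ := exists_between (lt_min hj hjj)
    refine ⟨δ, (alphaRatio_pos hm hx j).trans hjδ, hδ.trans_le (min_le_left _ _),
      mem_interior_FDH j (fun i => ?_) (fun r => ⟨mul_pos ?_ (hy o r), ?_⟩)⟩
    · exact ((alphaRatio_le_iff hm hx).mp le_rfl i).trans_lt
        (mul_lt_mul_of_pos_right hjδ (hx o i))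
    · exact (alphaRatio_pos hm hx j).trans hjδ
    · exact (mul_lt_mul_of_pos_right (hδ.trans_le (min_le_right _ _)) (hy o r)).trans_le
        ((le_betaRatio_iff hs hy).mp le_rfl r)

theorem one_le_sigmaMinus_of_not_leftDRS (hm : 0 < m) (hs : 0 < s) (hx : ∀ j i, 0 < x j i)
    (hy : ∀ j r, 0 < y j r) (h : ¬ LeftDRS x y o) : 1 ≤ sigmaMinus x y o := by
  rw [leftDRS_iff hm hs hx hy] at h
  push Not at h
  refine le_sigmaMinus hm hs hx hy fun α hα j hj => ?_
  obtain ⟨k, hk, hkeq⟩ := exists_respFun_eq_betaRatio hm hs hx hy ⟨j, hj⟩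
  rw [← EReal.coe_one, EReal.coe_le_coe_iff, one_le_div_of_neg (by linarith), hkeq]
  linarith [h k (hk.trans_lt hα)]

theorem sigmaMinus_le_one_of_not_leftIRS (hm : 0 < m) (hs : 0 < s) (hx : ∀ j i, 0 < x j i)
    (hy : ∀ j r, 0 < y j r) (h : ¬ LeftIRS x y o) : sigmaMinus x y o ≤ 1 := by
  obtain ⟨j, hj, hjj⟩ := (not_leftIRS_iff hm hs hx hy).mp h
  refine (sigmaMinus_le hm hs hx hy hj le_rfl).trans ?_
  rw [← EReal.coe_one, EReal.coe_le_coe_iff, div_le_one_of_neg (by linarith)]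
  linarith [betaRatio_le_respFun hm hs hx hy (le_refl (alphaRatio x y o j))]

theorem sigmaMinus_lt_one_of_leftDRS (hm : 0 < m) (hs : 0 < s) (hx : ∀ j i, 0 < x j i)
    (hy : ∀ j r, 0 < y j r) (h : LeftDRS x y o) : sigmaMinus x y o < 1 := by
  obtain ⟨j, hj, hjj⟩ := (leftDRS_iff hm hs hx hy).mp h
  refine (sigmaMinus_le hm hs hx hy hj le_rfl).trans_lt ?_
  rw [← EReal.coe_one, EReal.coe_lt_coe_iff, div_lt_one_of_neg (by linarith)]
  linarith [betaRatio_le_respFun hm hs hx hy (le_refl (alphaRatio x y o j))]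

theorem one_lt_sigmaMinus_of_leftIRS (hm : 0 < m) (hs : 0 < s) (hx : ∀ j i, 0 < x j i)
    (hy : ∀ j r, 0 < y j r) (h : LeftIRS x y o) : 1 < sigmaMinus x y o := by
  have hlt : ∀ k, alphaRatio x y o k < 1 → betaRatio x y o k < alphaRatio x y o k :=
    fun k hk => not_le.mp fun hle => (not_leftIRS_iff hm hs hx hy).mpr ⟨k, hk, hle⟩ h
  let F := Finset.univ.filter fun k => alphaRatio x y o k < 1
  let g : Fin n → EReal := fun k =>
    (((1 - betaRatio x y o k) / (1 - alphaRatio x y o k) : ℝ) : EReal)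
  -- `F.inf g = ⊤` when `F = ∅`, matching `σ_o^- = +∞` when no `α < 1` is feasible.
  calc (1 : EReal) < F.inf g := by
        refine (Finset.lt_inf_iff (EReal.coe_lt_top 1)).mpr fun k hk => ?_
        have hk1 := (Finset.mem_filter.mp hk).2
        have : (1 : ℝ) < (1 - betaRatio x y o k) / (1 - alphaRatio x y o k) := by
          rw [one_lt_div (by linarith)]
          linarith [hlt k hk1]
        exact EReal.coe_lt_coe_iff.mpr this
    _ ≤ sigmaMinus x y o := le_sigmaMinus hm hs hx hy fun α hα j hj => by
        obtain ⟨k, hk, hkeq⟩ := exists_respFun_eq_betaRatio hm hs hx hy ⟨j, hj⟩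
        have hk1 := hk.trans_lt hα
        refine (Finset.inf_le (Finset.mem_filter.mpr ⟨Finset.mem_univ k, hk1⟩)).trans ?_
        rw [EReal.coe_le_coe_iff, hkeq, ← neg_div_neg_eq (betaRatio x y o k - 1), neg_sub,
          neg_sub]
        exact div_le_div_of_nonneg_left (by linarith [hlt k hk1]) (by linarith) (by linarith)

end

theorem stmt15_general {n m s : ℕ} (hm : 0 < m) (hs : 0 < s)
    (x : Fin n → Fin m → ℝ) (y : Fin n → Fin s → ℝ)
    (hx : ∀ j i, 0 < x j i) (hy : ∀ j r, 0 < y j r)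
    (o : Fin n) :
    LeftCRS x y o ↔ sigmaMinus x y o = (1 : EReal) := by
  constructor
  · rintro ⟨hIRS, hDRS⟩
    exact le_antisymm (sigmaMinus_le_one_of_not_leftIRS hm hs hx hy hIRS)
      (one_le_sigmaMinus_of_not_leftDRS hm hs hx hy hDRS)
  · intro hσ
    exact ⟨fun hIRS => (one_lt_sigmaMinus_of_leftIRS hm hs hx hy hIRS).ne hσ.symm,
      fun hDRS => (sigmaMinus_lt_one_of_leftDRS hm hs hx hy hDRS).ne hσ⟩

/-- Left-CRS at the FDH_V-efficient DMU_o iff `σ_o^- = 1`. -/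
theorem stmt15 {n m s : ℕ} (hm : 0 < m) (hs : 0 < s)
    (x : Fin n → Fin m → ℝ) (y : Fin n → Fin s → ℝ)
    (hx : ∀ j i, 0 < x j i) (hy : ∀ j r, 0 < y j r)
    (o : Fin n) (heff : FDHEfficient x y o) :
    LeftCRS x y o ↔ sigmaMinus x y o = (1 : EReal) :=
  stmt15_general hm hs x y hx hy o
end
end

section
/- Let DMU_o = (x_o,y_o), o ∈ J, be FDH_V-efficient. If G-DRS prevails at DMU_o, then Left-DRS prevails at DMU_o, i.e., there exists δ ∈ (0,1) with (δ·x_o, δ·y_o) in the interior of T. -/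
open Set

noncomputable section

/-!
Since `θ_o^{ND} = θ_o^{C} < θ_o^{NI} ≤ 1`, some DMU_j and some `δ ≥ 1` satisfy
`δ x_j ≤ θ x_o` and `y_o ≤ δ y_j` with `θ < 1`. For every `d` strictly between `max θ 0 / δ`
and `1 / δ` the point `(d x_o, d y_o)` lies in the open box `x > x_j`, `0 < y < y_j`,
which is contained in `T`; and `d < 1 / δ ≤ 1`.
-/

section

variable {n m s : ℕ} (x : Fin n → Fin m → ℝ) (y : Fin n → Fin s → ℝ)

lemma thetaEff_le_one (o : Fin n) {D : Set ℝ} (hD : (1 : ℝ) ∈ D) :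
    thetaEff x y o D ≤ 1 := by
  set S := {θ : ℝ | ∃ j : Fin n, ∃ δ ∈ D,
    (∀ i, δ * x j i ≤ θ * x o i) ∧ (∀ r, y o r ≤ δ * y j r)}
  have h1 : (1 : ℝ) ∈ S := ⟨o, 1, hD, by simp, by simp⟩
  by_cases hS : BddBelow S
  · exact csInf_le hS h1
  · exact (Real.sInf_of_not_bddBelow hS).trans_le zero_le_one

lemma exists_lt_of_thetaEff_lt {o : Fin n} {D : Set ℝ} (hD : (1 : ℝ) ∈ D) {b : ℝ}
    (h : thetaEff x y o D < b) :
    ∃ θ ∈ {θ : ℝ | ∃ j : Fin n, ∃ δ ∈ D,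
      (∀ i, δ * x j i ≤ θ * x o i) ∧ (∀ r, y o r ≤ δ * y j r)}, θ < b :=
  exists_lt_of_csInf_lt ⟨1, o, 1, hD, by simp, by simp⟩ h

lemma GDRS.thetaEff_Ici_one_lt_one {o : Fin n} (h : GDRS x y o) :
    thetaEff x y o (Ici 1) < 1 :=
  calc thetaEff x y o (Ici 1) = thetaEff x y o (Ici 0) := h.2.symm
    _ < thetaEff x y o (Icc 0 1) := h.1
    _ ≤ 1 := thetaEff_le_one x y o ⟨zero_le_one, le_rfl⟩

lemma mem_interior_FDH_of_lt {p : (Fin m → ℝ) × (Fin s → ℝ)} (j : Fin n)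
    (hx : ∀ i, x j i < p.1 i) (hpos : ∀ r, 0 < p.2 r) (hy : ∀ r, p.2 r < y j r) :
    p ∈ interior (FDH x y) := by
  let U := (univ.pi fun i => Ioi (x j i)) ×ˢ (univ.pi fun r => Ioo 0 (y j r))
  have hU : IsOpen U :=
    (isOpen_set_pi finite_univ fun _ _ => isOpen_Ioi).prod
      (isOpen_set_pi finite_univ fun _ _ => isOpen_Ioo)
  have hUT : U ⊆ FDH x y := fun q ⟨hq₁, hq₂⟩ =>
    ⟨fun r => (hq₂ r trivial).1.le, j, fun i => (hq₁ i trivial).le,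
      fun r => (hq₂ r trivial).2.le⟩
  exact interior_mono hUT (hU.interior_eq.symm ▸
    ⟨fun i _ => hx i, fun r _ => ⟨hpos r, hy r⟩⟩)

lemma leftDRS_of_thetaEff_Ici_one_lt_one {o : Fin n} (hxo : ∀ i, 0 < x o i)
    (hy : ∀ j r, 0 < y j r) (h : thetaEff x y o (Ici 1) < 1) : LeftDRS x y o := by
  obtain ⟨θ, ⟨j, δ, hδ, hxj, hyj⟩, hθ⟩ := exists_lt_of_thetaEff_lt x y (mem_Ici.2 le_rfl) h
  have hδ₀ : 0 < δ := one_pos.trans_le hδ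
  obtain ⟨c, htc, hc₁⟩ := exists_between (max_lt hθ one_pos)
  have hc₀ : 0 < c := (le_max_right θ 0).trans_lt htc
  refine ⟨c / δ, by positivity, (div_lt_one hδ₀).2 (hc₁.trans_le hδ),
    mem_interior_FDH_of_lt x y j (fun i => ?_) (fun r => mul_pos (by positivity) (hy o r))
      (fun r => ?_)⟩
  · show x j i < c / δ * x o i
    rw [div_mul_eq_mul_div, lt_div_iff₀ hδ₀]
    calc x j i * δ ≤ θ * x o i := (mul_comm _ _).trans_le (hxj i)
      _ < c * x o i := mul_lt_mul_of_pos_right ((le_max_left θ 0).trans_lt htc) (hxo i)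
  · calc c / δ * y o r ≤ c / δ * (δ * y j r) := by gcongr; exact hyj r
      _ = c * y j r := by field_simp
      _ < y j r := mul_lt_of_lt_one_left (hy j r) hc₁

end

theorem stmt17_general {n m s : ℕ}
    (x : Fin n → Fin m → ℝ) (y : Fin n → Fin s → ℝ)
    (hx : ∀ j i, 0 < x j i) (hy : ∀ j r, 0 < y j r)
    (o : Fin n) (hgdrs : GDRS x y o) :
    ∃ δ : ℝ, 0 < δ ∧ δ < 1 ∧
      ((fun i => δ * x o i), (fun r => δ * y o r)) ∈ interior (FDH x y) :=
  leftDRS_of_thetaEff_Ici_one_lt_one x y (hx o) hy hgdrs.thetaEff_Ici_one_lt_one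

/-- if G-DRS prevails at the FDH_V-efficient DMU_o, then Left-DRS
prevails at it: there is `δ ∈ (0,1)` with `(δ x_o, δ y_o) ∈ int T`. -/
theorem stmt17 {n m s : ℕ} (hm : 0 < m) (hs : 0 < s)
    (x : Fin n → Fin m → ℝ) (y : Fin n → Fin s → ℝ)
    (hx : ∀ j i, 0 < x j i) (hy : ∀ j r, 0 < y j r)
    (o : Fin n) (heff : FDHEfficient x y o) (hgdrs : GDRS x y o) :
    ∃ δ : ℝ, 0 < δ ∧ δ < 1 ∧
      ((fun i => δ * x o i), (fun r => δ * y o r)) ∈ interior (FDH x y) :=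
  stmt17_general x y hx hy o hgdrs
end
end

section
/- Let DMU_o = (x_o,y_o), o ∈ J, be FDH_V-efficient. If G-CRS prevails at DMU_o, then Right-IRS does not prevail at DMU_o and Left-DRS does not prevail at DMU_o; that is, (δ·x_o, δ·y_o) is not in the interior of T for any δ > 1 and (δ·x_o, δ·y_o) is not in the interior of T for any δ ∈ (0,1). -/
open Set

noncomputable section

/-! If `(δ x_o, δ y_o)` is interior to `T`, one can move from it to `((δ - ε) x_o, (δ + ε) y_o) ∈ T`
for a small `ε > 0`. The DMU dominating that point, scaled by `(δ + ε)⁻¹`, then produces at least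
`y_o` from at most `(δ - ε)/(δ + ε) · x_o`, so `θ_o^C < 1`, contradicting G-CRS. -/

open Topology

/-- For a set unbounded below, `sInf` is the junk value `0`, which is why `0 < b` is assumed. -/
lemma Real.sInf_lt_of_mem_of_lt {S : Set ℝ} {a b : ℝ} (ha : a ∈ S) (hab : a < b) (hb : 0 < b) :
    sInf S < b := by
  by_cases hS : BddBelow S
  · exact (csInf_le hS ha).trans_lt hab
  · rwa [Real.sInf_of_not_bddBelow hS]

lemma exists_pos_add_smul_mem_of_mem_interior {E : Type*} [AddCommGroup E] [TopologicalSpace E]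
    [Module ℝ E] [ContinuousAdd E] [ContinuousSMul ℝ E] {A : Set E} {p : E}
    (hp : p ∈ interior A) (v : E) : ∃ ε : ℝ, 0 < ε ∧ p + ε • v ∈ A := by
  have hcont : Continuous fun ε : ℝ => p + ε • v := by fun_prop
  have hA : ∀ᶠ ε : ℝ in 𝓝[>] 0, p + ε • v ∈ A := by
    refine nhdsWithin_le_nhds (hcont.continuousAt.preimage_mem_nhds ?_)
    simpa using mem_interior_iff_mem_nhds.mp hp
  obtain ⟨ε, hεA, hε⟩ := (hA.and self_mem_nhdsWithin).exists
  exact ⟨ε, hε, hεA⟩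

lemma thetaEff_Ici_zero_lt_one_of_mem_FDH {n m s : ℕ} {x : Fin n → Fin m → ℝ}
    {y : Fin n → Fin s → ℝ} {o : Fin n} {a b : ℝ} (hb : 0 < b) (hab : a < b)
    (hmem : ((fun i => a * x o i), (fun r => b * y o r)) ∈ FDH x y) :
    thetaEff x y o (Ici 0) < 1 := by
  obtain ⟨-, j, hxj, hyj⟩ := hmem
  refine Real.sInf_lt_of_mem_of_lt (a := a / b)
    ⟨j, b⁻¹, inv_nonneg.mpr hb.le, fun i => ?_, fun r => ?_⟩ ((div_lt_one hb).mpr hab) one_pos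
  · rw [inv_mul_eq_div, div_mul_eq_mul_div]
    exact div_le_div_of_nonneg_right (hxj i) hb.le
  · rw [inv_mul_eq_div, le_div_iff₀ hb, mul_comm]
    exact hyj r

lemma thetaEff_Ici_zero_lt_one_of_mem_interior {n m s : ℕ} {x : Fin n → Fin m → ℝ}
    {y : Fin n → Fin s → ℝ} {o : Fin n} {δ : ℝ} (hδ : 0 < δ)
    (hint : ((fun i => δ * x o i), (fun r => δ * y o r)) ∈ interior (FDH x y)) :
    thetaEff x y o (Ici 0) < 1 := by
  obtain ⟨ε, hε, hmem⟩ := exists_pos_add_smul_mem_of_mem_interior hint (-x o, y o)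
  refine thetaEff_Ici_zero_lt_one_of_mem_FDH (a := δ - ε) (b := δ + ε) (by linarith)
    (by linarith) ?_
  convert hmem using 2 <;> ext <;> simp only [Prod.fst_add, Prod.snd_add, Prod.smul_fst,
    Prod.smul_snd, Pi.add_apply, Pi.smul_apply, Pi.neg_apply] <;> ring

theorem stmt18_general {n m s : ℕ}
    (x : Fin n → Fin m → ℝ) (y : Fin n → Fin s → ℝ)
    (o : Fin n) (hgcrs : GCRS x y o) :
    (∀ δ : ℝ, 1 < δ →
      ((fun i => δ * x o i), (fun r => δ * y o r)) ∉ interior (FDH x y)) ∧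
    (∀ δ : ℝ, 0 < δ → δ < 1 →
      ((fun i => δ * x o i), (fun r => δ * y o r)) ∉ interior (FDH x y)) := by
  have hθ : ¬ thetaEff x y o (Ici 0) < 1 := hgcrs.1.not_lt
  exact ⟨fun δ hδ hint => hθ (thetaEff_Ici_zero_lt_one_of_mem_interior (by linarith) hint),
    fun δ hδ _ hint => hθ (thetaEff_Ici_zero_lt_one_of_mem_interior hδ hint)⟩

/-- if G-CRS prevails at the FDH_V-efficient DMU_o, then neither
Right-IRS nor Left-DRS prevails at it. -/
theorem stmt18 {n m s : ℕ} (hm : 0 < m) (hs : 0 < s)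
    (x : Fin n → Fin m → ℝ) (y : Fin n → Fin s → ℝ)
    (hx : ∀ j i, 0 < x j i) (hy : ∀ j r, 0 < y j r)
    (o : Fin n) (heff : FDHEfficient x y o) (hgcrs : GCRS x y o) :
    (∀ δ : ℝ, 1 < δ →
      ((fun i => δ * x o i), (fun r => δ * y o r)) ∉ interior (FDH x y)) ∧
    (∀ δ : ℝ, 0 < δ → δ < 1 →
      ((fun i => δ * x o i), (fun r => δ * y o r)) ∉ interior (FDH x y)) :=
  stmt18_general x y o hgcrs
end
end

section
/- Let DMU_o = (x_o,y_o), o ∈ J, be FDH_V-efficient. If G-SCRS prevails at DMU_o, then both Right-IRS and Left-DRS prevail at DMU_o; that is, there exist δ_1 > 1 and δ_2 ∈ (0,1) such that (δ_1·x_o, δ_1·y_o) and (δ_2·x_o, δ_2·y_o) both lie in the interior of T. -/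
/-!
A value `θ_o(D) < 1` with `1 ∈ D` is witnessed by a DMU `j`, a factor `δ ∈ D` and some `θ < 1`
with `δ x_j ≤ θ x_o` and `y_o ≤ δ y_j`. Then for every `t` with `max θ 0 < t < 1` the point
`(t/δ) (x_o, y_o)` is strictly dominated by `(x_j, y_j)` in all inputs and outputs, hence lies in
the interior of `T`. Efficiency of DMU_o rules out `δ = 1`. So the witness for `θ_o^{NI}` has
`δ < 1`, and `t ∈ (δ, 1)` gives a factor `t/δ > 1`; the witness for `θ_o^{ND}` has `δ > 1`, so
`t/δ < 1`.
-/

open Set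

noncomputable section

namespace FDH

variable {n m s : ℕ} (x : Fin n → Fin m → ℝ) (y : Fin n → Fin s → ℝ)

lemma mem_interior_of_lt (j : Fin n) {p : (Fin m → ℝ) × (Fin s → ℝ)}
    (hx : ∀ i, x j i < p.1 i) (hpos : ∀ r, 0 < p.2 r) (hy : ∀ r, p.2 r < y j r) :
    p ∈ interior (FDH x y) := by
  have hopen : IsOpen ((univ.pi fun i => Ioi (x j i)) ×ˢ (univ.pi fun r => Ioo 0 (y j r))) :=
    (isOpen_set_pi finite_univ fun _ _ => isOpen_Ioi).prod
      (isOpen_set_pi finite_univ fun _ _ => isOpen_Ioo)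
  refine interior_maximal ?_ hopen ⟨mem_univ_pi.2 hx, mem_univ_pi.2 fun r => ⟨hpos r, hy r⟩⟩
  rintro q ⟨hq₁, hq₂⟩
  rw [mem_univ_pi] at hq₁ hq₂
  exact ⟨fun r => (hq₂ r).1.le, j, fun i => (hq₁ i).le, fun r => (hq₂ r).2.le⟩

variable {x y} {o : Fin n}

lemma exists_witness_of_thetaEff_lt_one {D : Set ℝ} (hD : (1 : ℝ) ∈ D)
    (h : thetaEff x y o D < 1) :
    ∃ θ < 1, ∃ j : Fin n, ∃ δ ∈ D,
      (∀ i, δ * x j i ≤ θ * x o i) ∧ (∀ r, y o r ≤ δ * y j r) := by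
  by_contra! hc
  refine h.not_ge (le_csInf ⟨1, o, 1, hD, fun i => le_rfl, fun r => by simp⟩ ?_)
  rintro θ ⟨j, δ, hδ, hxj, hyj⟩
  by_contra! hθ
  obtain ⟨r, hr⟩ := hc θ hθ j δ hδ hxj
  exact (hyj r).not_gt hr

lemma _root_.FDHEfficient.scale_ne_one (heff : FDHEfficient x y o) (hm : 0 < m)
    (hx : ∀ i, 0 < x o i) (hy : ∀ r, 0 ≤ y o r) {j : Fin n} {θ δ : ℝ} (hθ : θ < 1)
    (hxj : ∀ i, δ * x j i ≤ θ * x o i) (hyj : ∀ r, y o r ≤ δ * y j r) : δ ≠ 1 := by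
  rintro rfl
  have hθx : ∀ i, θ * x o i < x o i := fun i => mul_lt_of_lt_one_left (hx i) hθ
  refine heff ⟨(fun i => θ * x o i, y o), ⟨hy, j, fun i => by simpa using hxj i,
    fun r => by simpa using hyj r⟩, fun i => (hθx i).le, fun r => le_rfl,
    fun h => (hθx ⟨0, hm⟩).ne (congrFun (congrArg Prod.fst h) ⟨0, hm⟩)⟩

lemma scale_div_mem_interior (hx : ∀ i, 0 < x o i) (hy : ∀ r, 0 < y o r) {j : Fin n}
    {θ δ t : ℝ} (hδ : 0 < δ) (hxj : ∀ i, δ * x j i ≤ θ * x o i)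
    (hyj : ∀ r, y o r ≤ δ * y j r) (ht : 0 < t) (hθt : θ < t) (ht1 : t < 1) :
    (fun i => t / δ * x o i, fun r => t / δ * y o r) ∈ interior (FDH x y) := by
  have hδt : δ * (t / δ) = t := mul_div_cancel₀ t hδ.ne'
  refine mem_interior_of_lt x y j (fun i => ?_) (fun r => mul_pos (div_pos ht hδ) (hy r)) (fun r => ?_)
  · refine lt_of_mul_lt_mul_left ?_ hδ.le
    calc δ * x j i ≤ θ * x o i := hxj i
      _ < t * x o i := mul_lt_mul_of_pos_right hθt (hx i)
      _ = δ * (t / δ * x o i) := by rw [← mul_assoc, hδt]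
  · refine lt_of_mul_lt_mul_left ?_ hδ.le
    calc δ * (t / δ * y o r) = t * y o r := by rw [← mul_assoc, hδt]
      _ < y o r := mul_lt_of_lt_one_left (hy r) ht1
      _ ≤ δ * y j r := hyj r

end FDH

open FDH in
/-- if G-SCRS prevails at the FDH_V-efficient DMU_o, then both
Right-IRS and Left-DRS prevail at it. -/
theorem stmt19 {n m s : ℕ} (hm : 0 < m) (hs : 0 < s)
    (x : Fin n → Fin m → ℝ) (y : Fin n → Fin s → ℝ)
    (hx : ∀ j i, 0 < x j i) (hy : ∀ j r, 0 < y j r)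
    (o : Fin n) (heff : FDHEfficient x y o) (hgscrs : GSCRS x y o) :
    (∃ δ : ℝ, 1 < δ ∧
      ((fun i => δ * x o i), (fun r => δ * y o r)) ∈ interior (FDH x y)) ∧
    (∃ δ : ℝ, 0 < δ ∧ δ < 1 ∧
      ((fun i => δ * x o i), (fun r => δ * y o r)) ∈ interior (FDH x y)) := by
  obtain ⟨-, hNI, hND⟩ := hgscrs
  have hyo : ∀ r, 0 ≤ y o r := fun r => (hy o r).le
  constructor
  · obtain ⟨θ, hθ, j, δ, ⟨-, hδ_le⟩, hxj, hyj⟩ :=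
      exists_witness_of_thetaEff_lt_one (D := Icc 0 1) ⟨zero_le_one, le_rfl⟩ (hNI ▸ hND)
    have hδ : 0 < δ := pos_of_mul_pos_left ((hy o ⟨0, hs⟩).trans_le (hyj _)) (hy j _).le
    have hδ1 : δ < 1 := hδ_le.lt_of_ne (heff.scale_ne_one hm (hx o) hyo hθ hxj hyj)
    obtain ⟨t, hθδt, ht1⟩ := exists_between (max_lt hθ hδ1)
    have hδt : δ < t := (le_max_right θ δ).trans_lt hθδt
    exact ⟨t / δ, (one_lt_div hδ).2 hδt, scale_div_mem_interior (hx o) (hy o) hδ hxj hyj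
      (hδ.trans hδt) ((le_max_left θ δ).trans_lt hθδt) ht1⟩
  · obtain ⟨θ, hθ, j, δ, hδ_ge, hxj, hyj⟩ :=
      exists_witness_of_thetaEff_lt_one (mem_Ici.2 le_rfl) hND
    have hδ : 0 < δ := zero_lt_one.trans_le hδ_ge
    have hδ1 : 1 < δ := hδ_ge.lt_of_ne' (heff.scale_ne_one hm (hx o) hyo hθ hxj hyj)
    obtain ⟨t, hθ0t, ht1⟩ := exists_between (max_lt hθ zero_lt_one)
    have ht : 0 < t := (le_max_right θ 0).trans_lt hθ0t
    exact ⟨t / δ, div_pos ht hδ, (div_lt_one hδ).2 (ht1.trans hδ1), scale_div_mem_interior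
      (hx o) (hy o) hδ hxj hyj ht ((le_max_left θ 0).trans_lt hθ0t) ht1⟩
end
end
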